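/- Let n, k be positive integers and let φ : M_n(ℂ) → M_k(ℂ) be a completely positive linear map. Then there exist a positive integer m with m ≤ nk and n×k complex matrices V_1, …, V_m such that φ(A) = V_1^*·A·V_1 + ⋯ + V_m^*·A·V_m for all A ∈ M_n(ℂ), where (·)^* denotes the conjugate transpose. -/

import Mathlib

open scoped Matrix ComplexOrder

/-- The map `I_m ⊗ φ`: apply `φ` to each `n×n` block of an `mn×mn` block matrix. -/
def blockMap {n k : ℕ} (φ : Matrix (Fin n) (Fin n) ℂ →ₗ[ℂ] Matrix (Fin k) (Fin k) ℂ)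
    (m : ℕ) (M : Matrix (Fin m × Fin n) (Fin m × Fin n) ℂ) :
    Matrix (Fin m × Fin k) (Fin m × Fin k) ℂ :=
  Matrix.of fun r s => φ (Matrix.of fun a b => M (r.1, a) (s.1, b)) r.2 s.2

/-- A linear map `φ : M_n(ℂ) → M_k(ℂ)` is completely positive if `I_m ⊗ φ` maps
positive semidefinite matrices to positive semidefinite matrices for every `m`. -/
def IsCompletelyPositive {n k : ℕ}
    (φ : Matrix (Fin n) (Fin n) ℂ →ₗ[ℂ] Matrix (Fin k) (Fin k) ℂ) : Prop :=
  ∀ (m : ℕ) (M : Matrix (Fin m × Fin n) (Fin m × Fin n) ℂ),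
    M.PosSemidef → (blockMap φ m M).PosSemidef

/-- The Choi matrix `[φ(E_{l,m})]_{l,m}` of a linear map `φ : M_n(ℂ) → M_k(ℂ)`,
with entries `(Φ_φ)_{(l,i),(m,j)} = φ(E^{(n)}_{l,m})_{i,j}`. -/
noncomputable def choiMatrix {n k : ℕ}
    (φ : Matrix (Fin n) (Fin n) ℂ →ₗ[ℂ] Matrix (Fin k) (Fin k) ℂ) :
    Matrix (Fin n × Fin k) (Fin n × Fin k) ℂ :=
  Matrix.of fun r s => φ (Matrix.single r.1 s.1 1) r.2 s.2

/-!
Complete positivity, applied to the rank-one projection onto `∑ₗ eₗ ⊗ eₗ`, makes the Choi matrix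
of `φ` positive semidefinite, so it factors as `Bᴴ * B` with `B` square of size `nk`. Reshaping the
rows of `B` into `n × k` matrices gives Kraus operators: the map `A ↦ ∑ Vᵢᴴ A Vᵢ` they define has
Choi matrix `Bᴴ * B`, and a linear map on `M_n(ℂ)` is determined by its Choi matrix.
-/

theorem Matrix.PosSemidef.exists_eq_conjTranspose_mul_self {𝕜 ι : Type*} [RCLike 𝕜]
    [Fintype ι] {M : Matrix ι ι 𝕜} (hM : M.PosSemidef) :
    ∃ B : Matrix ι ι 𝕜, M = Bᴴ * B := by
  classical
  open scoped MatrixOrder Matrix.Norms.L2Operator in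
  exact CStarAlgebra.nonneg_iff_eq_star_mul_self.mp hM.nonneg

section Choi

variable {n k : ℕ} {ι : Type*} [Fintype ι]

theorem blockMap_vecMulVec_diagonal_indicator
    (φ : Matrix (Fin n) (Fin n) ℂ →ₗ[ℂ] Matrix (Fin k) (Fin k) ℂ) :
    let v : Fin n × Fin n → ℂ := fun p => if p.1 = p.2 then 1 else 0
    blockMap φ n (Matrix.vecMulVec v (star v)) = choiMatrix φ := by
  intro v
  ext r s
  refine congrArg (fun M => φ M r.2 s.2) ?_
  ext a b
  by_cases h1 : r.1 = a <;> by_cases h2 : s.1 = b <;>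
    simp [v, Matrix.vecMulVec_apply, h1, h2]

theorem IsCompletelyPositive.choiMatrix_posSemidef
    {φ : Matrix (Fin n) (Fin n) ℂ →ₗ[ℂ] Matrix (Fin k) (Fin k) ℂ}
    (hφ : IsCompletelyPositive φ) : (choiMatrix φ).PosSemidef :=
  blockMap_vecMulVec_diagonal_indicator φ ▸ hφ n _ (Matrix.posSemidef_vecMulVec_self_star _)

theorem choiMatrix_injective :
    Function.Injective
      (choiMatrix : (Matrix (Fin n) (Fin n) ℂ →ₗ[ℂ] Matrix (Fin k) (Fin k) ℂ) → _) := by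
  intro φ ψ h
  refine Matrix.ext_linearMap ℂ fun l m => LinearMap.ext_ring ?_
  ext i j
  exact congrFun (congrFun h (l, i)) (m, j)

def krausMap (V : ι → Matrix (Fin n) (Fin k) ℂ) :
    Matrix (Fin n) (Fin n) ℂ →ₗ[ℂ] Matrix (Fin k) (Fin k) ℂ where
  toFun A := ∑ i, (V i)ᴴ * A * V i
  map_add' A B := by simp only [Matrix.mul_add, Matrix.add_mul, Finset.sum_add_distrib]
  map_smul' c A := by
    simp only [Matrix.mul_smul, Matrix.smul_mul, Finset.smul_sum, RingHom.id_apply]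

theorem krausMap_apply (V : ι → Matrix (Fin n) (Fin k) ℂ)
    (A : Matrix (Fin n) (Fin n) ℂ) : krausMap V A = ∑ i, (V i)ᴴ * A * V i := rfl

theorem choiMatrix_krausMap (B : Matrix ι (Fin n × Fin k) ℂ) :
    choiMatrix (krausMap fun i => Matrix.of fun a j => B i (a, j)) = Bᴴ * B := by
  ext r s
  simp [choiMatrix, krausMap_apply, Matrix.sum_apply, Matrix.mul_apply, Matrix.single_apply,
    ite_and]

end Choi

theorem kraus_representation_of_completelyPositive {n k : ℕ} (hn : 0 < n) (hk : 0 < k)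
    (φ : Matrix (Fin n) (Fin n) ℂ →ₗ[ℂ] Matrix (Fin k) (Fin k) ℂ)
    (hφ : IsCompletelyPositive φ) :
    ∃ m : ℕ, 0 < m ∧ m ≤ n * k ∧ ∃ V : Fin m → Matrix (Fin n) (Fin k) ℂ,
      ∀ A : Matrix (Fin n) (Fin n) ℂ, φ A = ∑ i, (V i)ᴴ * A * V i := by
  obtain ⟨B, hB⟩ := hφ.choiMatrix_posSemidef.exists_eq_conjTranspose_mul_self
  set B' : Matrix (Fin (n * k)) (Fin n × Fin k) ℂ := B.submatrix finProdFinEquiv.symm id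
  have hB' : B'ᴴ * B' = Bᴴ * B := by
    simp [B', Matrix.conjTranspose_submatrix, Matrix.submatrix_mul_equiv]
  refine ⟨n * k, Nat.mul_pos hn hk, le_rfl, fun t => Matrix.of fun a j => B' t (a, j), fun A => ?_⟩
  have hφ_kraus : φ = krausMap fun t => Matrix.of fun a j => B' t (a, j) :=
    choiMatrix_injective (by rw [choiMatrix_krausMap, hB', hB])
  exact LinearMap.congr_fun hφ_kraus A
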